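/- Let N be a positive integer and φ_0, …, φ_{N−1} : ℝ → ℝ measurable functions that are orthonormal in L²(ℝ): ∫_ℝ φ_i(x) φ_j(x) dx = δ_{ij} for 0 ≤ i, j ≤ N−1. Set K_N(x,y) := ∑_{j=0}^{N−1} φ_j(x) φ_j(y). Then for every 1 ≤ n ≤ N and all real x_1, …, x_n: ∫_{ℝ^{N−n}} det( K_N(x_i, x_j) )_{i,j=1}^{N} dx_{n+1} ⋯ dx_N = (N−n)! · det( K_N(x_i, x_j) )_{i,j=1}^{n}. -/

import Mathlib

/-!
Write `K_N(y_i, y_j) = (Φ Φᵀ)_{ij}` with `Φ_{ik} = φ_k(y_i)`, so that `det K_N = (det Φ)²` is a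
double sum over permutations `σ, τ` of products of the `φ_k`. Integrating out the last `N - n`
variables, orthonormality kills every pair `(σ, τ)` that disagrees on the last `N - n` positions.
Writing a surviving `σ` as `τ` followed by a permutation `q` of the first `n` positions, the sum
over `q` is a determinant that depends only on the restriction `f` of `τ` to the first `n`
positions. Each injective `f` is the restriction of `(N - n)!` permutations, and the sum over all
`f` is the Cauchy–Binet expansion of `det (K_N(x_i, x_j))_{i,j ≤ n}`.
-/

open Finset Function MeasureTheory Matrix Equiv Equiv.Perm

variable {α β : Type*}

namespace Equiv.Perm

section Finite

variable [Finite α] [Finite β]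

theorem exists_sumCongr_one_left_eq {ρ : Perm (α ⊕ β)} (h : ∀ a, ρ (.inl a) = .inl a) :
    ∃ r : Perm β, sumCongr 1 r = ρ := by
  obtain ⟨⟨q, r⟩, hqr⟩ := mem_sumCongrHom_range_of_perm_mapsTo_inl (σ := ρ)
    (by rintro _ ⟨a, rfl⟩; exact ⟨a, (h a).symm⟩)
  refine ⟨r, ?_⟩
  rw [← hqr]
  ext (a | b)
  · simpa [← hqr] using (h a).symm
  · rfl

theorem exists_sumCongr_one_right_eq {ρ : Perm (α ⊕ β)} (h : ∀ b, ρ (.inr b) = .inr b) :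
    ∃ q : Perm α, sumCongr q 1 = ρ := by
  obtain ⟨⟨q, r⟩, hqr⟩ := mem_sumCongrHom_range_of_perm_mapsTo_inl (σ := ρ)
    ((perm_mapsTo_inl_iff_mapsTo_inr ρ).2 (by rintro _ ⟨b, rfl⟩; exact ⟨b, (h b).symm⟩))
  refine ⟨q, ?_⟩
  rw [← hqr]
  ext (a | b)
  · rfl
  · simpa [← hqr] using (h b).symm

end Finite

variable [Fintype α] [Fintype β] [DecidableEq α] [DecidableEq β]

theorem sum_filter_fix_inr_eq_sum_sumCongr {M : Type*} [AddCommMonoid M] (g : Perm (α ⊕ β) → M) :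
    ∑ ρ with ∀ b, ρ (.inr b) = .inr b, g ρ = ∑ q : Perm α, g (sumCongr q 1) := by
  symm
  refine sum_nbij (fun q => sumCongr q 1) (by simp) ?_ ?_ (fun _ _ => rfl)
  · intro q _ q' _ h
    ext a
    simpa using congr($h (.inl a))
  · intro ρ hρ
    simpa using exists_sumCongr_one_right_eq (mem_filter.1 hρ).2

theorem card_filter_comp_inl_eq_factorial {f : α → α ⊕ β} (hf : Injective f) :
    #{τ : Perm (α ⊕ β) | ⇑τ ∘ Sum.inl = f} = (Fintype.card β).factorial := by
  obtain ⟨τ₀, hτ₀⟩ := exists_extending_pair Sum.inl f Sum.inl_injective hf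
  have hfiber : ({τ : Perm (α ⊕ β) | ⇑τ ∘ Sum.inl = f} : Finset _)
      = univ.image fun r : Perm β => τ₀ * sumCongr 1 r := by
    ext τ
    simp only [mem_filter, mem_univ, true_and, mem_image]
    constructor
    · intro hτ
      obtain ⟨r, hr⟩ := exists_sumCongr_one_left_eq (ρ := τ₀⁻¹ * τ) fun a => by
        rw [mul_apply, ← comp_apply (f := ⇑τ), hτ, ← hτ₀ a]
        exact τ₀.symm_apply_apply _
      exact ⟨r, by rw [hr, mul_inv_cancel_left]⟩
    · rintro ⟨r, rfl⟩
      funext a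
      simp [hτ₀]
  have hinj : Injective fun r : Perm β => τ₀ * sumCongr 1 r := fun r r' h => by
    ext b
    simpa using congr($(mul_left_cancel h) (.inr b))
  rw [hfiber, card_image_of_injective _ hinj, card_univ, Fintype.card_perm]

theorem sum_comp_inl_eq_factorial_smul_sum {M : Type*} [AddCommMonoid M] (G : (α → α ⊕ β) → M)
    (hG : ∀ f, ¬Injective f → G f = 0) :
    ∑ τ : Perm (α ⊕ β), G (⇑τ ∘ Sum.inl) = (Fintype.card β).factorial • ∑ f, G f := by
  rw [← sum_fiberwise' univ (fun τ : Perm (α ⊕ β) => ⇑τ ∘ Sum.inl), smul_sum]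
  refine sum_congr rfl fun f _ => ?_
  rw [sum_const]
  by_cases hf : Injective f
  · rw [card_filter_comp_inl_eq_factorial hf]
  · simp [hG f hf]

end Equiv.Perm

namespace Matrix

variable {ι R : Type*} [Fintype α] [Fintype ι] [DecidableEq α] [CommRing R]

theorem det_mul_eq_sum_prod_mul_det_submatrix (B : Matrix α ι R) (C : Matrix ι α R) :
    (B * C).det = ∑ f : α → ι, (∏ a, B a (f a)) * (C.submatrix f id).det := by
  have hrows : B * C = fun a => ∑ k, B a k • C k := by
    ext a b
    simp [mul_apply]
  have := (detRowAlternating (n := α) (R := R)).toMultilinearMap.map_sum (fun a k => B a k • C k)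
  simp only [AlternatingMap.coe_multilinearMap, MultilinearMap.map_smul_univ] at this
  rw [det, hrows, this]
  rfl

end Matrix

section KernelMatrix

variable {X R ι κ : Type*} [CommRing R] [Fintype ι]

local notation "ε " σ:arg => ((sign σ : ℤ) : R)

def kernelMatrix (ψ : ι → X → R) (y : κ → X) : Matrix κ κ R :=
  of fun i j => ∑ k, ψ k (y i) * ψ k (y j)

theorem det_kernelMatrix_eq_sum_sign_mul_sign [DecidableEq ι] (ψ : ι → X → R) (y : ι → X) :
    (kernelMatrix ψ y).det
      = ∑ σ : Perm ι, ∑ τ : Perm ι, ε σ * ε τ * ∏ i, ψ (σ i) (y i) * ψ (τ i) (y i) := by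
  set Φ : Matrix ι ι R := of fun i k => ψ k (y i)
  have hΦ : kernelMatrix ψ y = Φ * Φᵀ := by
    ext i j
    simp [kernelMatrix, Φ, Matrix.mul_apply]
  have hdet : Φ.det = ∑ σ : Perm ι, ε σ * ∏ i, ψ (σ i) (y i) := by
    rw [← det_transpose, det_apply']
    rfl
  rw [hΦ, det_mul, det_transpose, hdet, sum_mul_sum]
  simp only [prod_mul_distrib]
  refine sum_congr rfl fun σ _ => sum_congr rfl fun τ _ => by ring

theorem det_kernelMatrix_eq_sum_prod_mul_det [Fintype κ] [DecidableEq κ] (ψ : ι → X → R)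
    (y : κ → X) :
    (kernelMatrix ψ y).det
      = ∑ f : κ → ι, (∏ a, ψ (f a) (y a)) * (of fun i j => ψ (f i) (y j)).det :=
  det_mul_eq_sum_prod_mul_det_submatrix (of fun a k => ψ k (y a)) (of fun k b => ψ k (y b))

variable [Fintype α] [Fintype β] [DecidableEq α] [DecidableEq β]

theorem det_kernelMatrix_sumElim (ψ : α ⊕ β → X → R) (x : α → X) (η : β → X) :
    (kernelMatrix ψ (Sum.elim x η)).det
      = ∑ σ : Perm (α ⊕ β), ∑ τ : Perm (α ⊕ β),
          ε σ * ε τ * (∏ a, ψ (σ (.inl a)) (x a) * ψ (τ (.inl a)) (x a))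
            * ∏ b, ψ (σ (.inr b)) (η b) * ψ (τ (.inr b)) (η b) := by
  rw [det_kernelMatrix_eq_sum_sign_mul_sign]
  simp only [Fintype.prod_sum_type, Sum.elim_inl, Sum.elim_inr, mul_assoc]

theorem sum_perm_pair_agree_inr_eq_factorial_mul_det (ψ : α ⊕ β → X → R) (x : α → X) :
    ∑ σ : Perm (α ⊕ β), ∑ τ : Perm (α ⊕ β),
        ε σ * ε τ * (∏ a, ψ (σ (.inl a)) (x a) * ψ (τ (.inl a)) (x a))
          * ∏ b, (if σ (.inr b) = τ (.inr b) then 1 else 0)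
      = (Fintype.card β).factorial * (kernelMatrix ψ x).det := by
  set G : (α → α ⊕ β) → R := fun f => (∏ a, ψ (f a) (x a)) * (of fun i j => ψ (f i) (x j)).det
  have hG : ∀ f, ¬Injective f → G f = 0 := by
    intro f hf
    obtain ⟨a, a', hfa, hne⟩ := not_injective_iff.mp hf
    have hrow : (of fun i j => ψ (f i) (x j)) a = (of fun i j => ψ (f i) (x j)) a' := by
      ext j
      simp [hfa]
    simp only [G, det_zero_of_row_eq hne hrow, mul_zero]
  have hinner : ∀ τ : Perm (α ⊕ β),
      ∑ σ : Perm (α ⊕ β), ε σ * ε τ * (∏ a, ψ (σ (.inl a)) (x a) * ψ (τ (.inl a)) (x a))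
          * ∏ b, (if σ (.inr b) = τ (.inr b) then 1 else 0)
        = G (⇑τ ∘ Sum.inl) := by
    intro τ
    have hsign : ∀ ρ : Perm (α ⊕ β), ε (τ * ρ) * ε τ = ε ρ := fun ρ => by
      rw [← Int.cast_mul, ← Units.val_mul, Perm.sign_mul, mul_comm (sign τ), mul_assoc,
        Int.units_mul_self, mul_one]
    calc _ = ∑ ρ : Perm (α ⊕ β), ε (τ * ρ) * ε τ
              * (∏ a, ψ (τ (ρ (.inl a))) (x a) * ψ (τ (.inl a)) (x a))
              * ∏ b, (if τ (ρ (.inr b)) = τ (.inr b) then 1 else 0) :=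
          (Equiv.sum_comp (Equiv.mulLeft τ) _).symm
      _ = ∑ ρ with ∀ b, ρ (.inr b) = .inr b,
            ε ρ * ∏ a, ψ (τ (ρ (.inl a))) (x a) * ψ (τ (.inl a)) (x a) := by
          rw [sum_filter]
          refine sum_congr rfl fun ρ _ => ?_
          simp only [τ.injective.eq_iff, Fintype.prod_boole, hsign]
          split_ifs <;> simp
      _ = ∑ q : Perm α, ε q * ∏ a, ψ (τ (.inl (q a))) (x a) * ψ (τ (.inl a)) (x a) := by
          rw [sum_filter_fix_inr_eq_sum_sumCongr]
          simp [sign_sumCongr]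
      _ = G (⇑τ ∘ Sum.inl) := by
          simp only [G, det_apply', mul_sum, prod_mul_distrib]
          refine sum_congr rfl fun q _ => ?_
          simp only [of_apply, Function.comp_apply]
          ring
  rw [sum_comm, sum_congr rfl fun τ _ => hinner τ, sum_comp_inl_eq_factorial_smul_sum G hG,
    det_kernelMatrix_eq_sum_prod_mul_det, nsmul_eq_mul]

theorem integral_det_kernelMatrix_sumElim [MeasurableSpace X] (μ : Measure X)
    [SigmaFinite μ] (ψ : α ⊕ β → X → ℝ) (hL2 : ∀ k, MemLp (ψ k) 2 μ)
    (horth : ∀ i j, ∫ t, ψ i t * ψ j t ∂μ = if i = j then 1 else 0) (x : α → X) :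
    ∫ η : β → X, (kernelMatrix ψ (Sum.elim x η)).det ∂(Measure.pi fun _ => μ)
      = (Fintype.card β).factorial * (kernelMatrix ψ x).det := by
  have hint : ∀ f g : β → α ⊕ β,
      Integrable (fun η : β → X => ∏ b, ψ (f b) (η b) * ψ (g b) (η b)) (Measure.pi fun _ => μ) :=
    fun f g => Integrable.fintype_prod fun b => (hL2 (f b)).integrable_mul (hL2 (g b))
  have horth_pi : ∀ f g : β → α ⊕ β,
      ∫ η : β → X, ∏ b, ψ (f b) (η b) * ψ (g b) (η b) ∂(Measure.pi fun _ => μ)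
        = ∏ b, if f b = g b then 1 else 0 := fun f g => by
    rw [integral_fintype_prod_eq_prod (f := fun b t => ψ (f b) t * ψ (g b) t)]
    exact prod_congr rfl fun b _ => horth _ _
  simp_rw [det_kernelMatrix_sumElim]
  rw [integral_finsetSum _ fun σ _ => integrable_finsetSum _ fun τ _ => (hint _ _).const_mul _]
  simp_rw [integral_finsetSum _ fun τ _ => (hint _ _).const_mul _, integral_const_mul]
  simp only [horth_pi]
  exact sum_perm_pair_agree_inr_eq_factorial_mul_det ψ x

end KernelMatrix

theorem orthonormal_kernel_correlation_integrated_out_general (n m : ℕ)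
    (φ : Fin (n + m) → ℝ → ℝ)
    (hL2 : ∀ j, MemLp (φ j) 2 (volume : Measure ℝ))
    (horth : ∀ i j, ∫ x : ℝ, φ i x * φ j x = if i = j then (1 : ℝ) else 0)
    (K : ℝ → ℝ → ℝ)
    (hK : ∀ x y, K x y = ∑ j : Fin (n + m), φ j x * φ j y)
    (x : Fin n → ℝ) :
    (∫ η : Fin m → ℝ,
        (Matrix.of fun i j : Fin (n + m) =>
          K (Fin.append x η i) (Fin.append x η j)).det)
    = (Nat.factorial m : ℝ) *
        (Matrix.of fun i j : Fin n => K (x i) (x j)).det := by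
  set ψ : Fin n ⊕ Fin m → ℝ → ℝ := fun k => φ (finSumFinEquiv k)
  have hKψ : ∀ s t, K s t = ∑ k, ψ k s * ψ k t := fun s t => by
    rw [hK]
    exact (finSumFinEquiv.sum_comp _).symm
  have hψorth : ∀ i j, ∫ t, ψ i t * ψ j t = if i = j then 1 else 0 := fun i j => by
    simp [ψ, horth, finSumFinEquiv.injective.eq_iff]
  have hdet : ∀ η : Fin m → ℝ,
      (Matrix.of fun i j : Fin (n + m) => K (Fin.append x η i) (Fin.append x η j)).det
        = (kernelMatrix ψ (Sum.elim x η)).det := fun η => by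
    rw [← det_submatrix_equiv_self finSumFinEquiv]
    congr 1
    ext (i | i) (j | j) <;> simp [kernelMatrix, hKψ]
  simp_rw [hdet]
  rw [volume_pi, integral_det_kernelMatrix_sumElim volume ψ (fun k => hL2 _) hψorth x,
    Fintype.card_fin]
  congr 2
  ext i j
  simp [kernelMatrix, hKψ]

/-- Integrating out the last `N - n` variables of the determinantal density built from
orthonormal functions `φ_0, …, φ_{N-1}` (here `N = n + m`, so `N - n = m`):
`∫_{ℝ^{N-n}} det(K_N(x_i,x_j))_{i,j=1}^N dx_{n+1}⋯dx_N = (N-n)! det(K_N(x_i,x_j))_{i,j=1}^n`. -/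
theorem orthonormal_kernel_correlation_integrated_out (n m : ℕ) (hn : 1 ≤ n)
    (φ : Fin (n + m) → ℝ → ℝ)
    (hmeas : ∀ j, Measurable (φ j))
    (hL2 : ∀ j, MemLp (φ j) 2 (volume : Measure ℝ))
    (horth : ∀ i j, ∫ x : ℝ, φ i x * φ j x = if i = j then (1 : ℝ) else 0)
    (K : ℝ → ℝ → ℝ)
    (hK : ∀ x y, K x y = ∑ j : Fin (n + m), φ j x * φ j y)
    (x : Fin n → ℝ) :
    (∫ η : Fin m → ℝ,
        (Matrix.of fun i j : Fin (n + m) =>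
          K (Fin.append x η i) (Fin.append x η j)).det)
    = (Nat.factorial m : ℝ) *
        (Matrix.of fun i j : Fin n => K (x i) (x j)).det :=
  orthonormal_kernel_correlation_integrated_out_general n m φ hL2 horth K hK x
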